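/- arXiv:2302.11890 — 3 statements merged into one kernel-verified Lean document; each statement's English description precedes it below -/
import Mathlib

section
/- Every step-dependent sequential scoring rule is continuous: for all disjoint profiles A, A' and every committee size k such that |f(A,k)| = 1, there exists a positive integer j such that f(jA + A', k) = f(A,k), where jA denotes j disjoint copies of A. -/
/-!
Scores are additive, so on `Q = jA + A'` every committee `T` scores `j · s(A,T) + s(A',T)`.
Only finitely many committees exist, so for `j` large enough every strict preference of `A`
between two committees survives in `Q`. Then every greedy choice available for `Q` is also one
for `A`, so `f(Q,k) ⊆ f(A,k)`; as `f(Q,k)` is nonempty, `f(A,k)` being a singleton forces equality.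
-/

open Finset
open scoped Classical

structure Profile (C : Type) where
  voters : Finset ℕ
  ballot : ℕ → Finset C

namespace Profile

variable {C : Type}

def combine (A B : Profile C) : Profile C :=
  ⟨A.voters ∪ B.voters, fun i => if i ∈ A.voters then A.ballot i else B.ballot i⟩

def Disj (A B : Profile C) : Prop := Disjoint A.voters B.voters

def permVoters (π : Equiv.Perm ℕ) (A : Profile C) : Profile C :=
  ⟨A.voters.map π.toEmbedding, fun i => A.ballot (π.symm i)⟩

def mapCand [DecidableEq C] (τ : Equiv.Perm C) (A : Profile C) : Profile C :=
  ⟨A.voters, fun i => (A.ballot i).image τ⟩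

end Profile

variable {C : Type} [Fintype C] [DecidableEq C]

/-- `B` is a relabeled (disjoint-renaming) copy of the profile `A`. -/
def IsCopy (A B : Profile C) : Prop :=
  ∃ e : ℕ ↪ ℕ, B.voters = A.voters.map e ∧ ∀ i ∈ A.voters, B.ballot (e i) = A.ballot i

/-- `B` consists of `j` pairwise disjoint copies of the profile `A`. -/
def IsNCopies (j : ℕ) (A B : Profile C) : Prop :=
  ∃ P : Fin j → Profile C,
    (∀ t, IsCopy A (P t)) ∧
    (∀ s t, s ≠ t → Disjoint (P s).voters (P t).voters) ∧
    B.voters = Finset.univ.biUnion (fun t => (P t).voters) ∧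
    ∀ t, ∀ i ∈ (P t).voters, B.ballot i = (P t).ballot i

noncomputable def scoreV (v : Finset C → Finset C → ℝ) (A : Profile C) (W : Finset C) : ℝ :=
  ∑ i ∈ A.voters, v (A.ballot i) W

/-- The candidates whose addition to `W` maximizes the total score. -/
noncomputable def genOf (v : Finset C → Finset C → ℝ) (A : Profile C) (W : Finset C) : Finset C :=
  (univ \ W).filter fun x => ∀ y ∈ univ \ W, scoreV v A (insert y W) ≤ scoreV v A (insert x W)

/-- The sequential valuation rule induced by the valuation function `v`. -/
noncomputable def seqRule (v : Finset C → Finset C → ℝ) : Profile C → ℕ → Finset (Finset C)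
  | _, 0 => {∅}
  | A, k+1 => (seqRule v A k).biUnion fun W => (genOf v A W).image fun x => insert x W

/-- The sequential scoring rule induced by a step-dependent counting function
`h(|Aᵢ ∩ W|, |W|, |Aᵢ|)`. -/
noncomputable def stepRule (h : ℕ → ℕ → ℕ → ℝ) : Profile C → ℕ → Finset (Finset C) :=
  seqRule fun b W => h ((b ∩ W).card) W.card b.card

/-- The non-degeneracy condition on step-dependent counting functions. -/
def IsStepCounting (m : ℕ) (h : ℕ → ℕ → ℕ → ℝ) : Prop :=
  ∀ y, 1 ≤ y → y ≤ m - 1 →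
    ∃ x z, 1 ≤ x ∧ x ≤ y ∧ x ≤ z ∧ z ≤ m - 1 - (y - x) ∧ h x y z ≠ h (x-1) y z

theorem exists_nat_mul_add_lt_of_lt {α : Type*} [Finite α] (f g : α → ℝ) :
    ∃ j : ℕ, 0 < j ∧ ∀ a b, f a < f b → j * f a + g a < j * f b + g b := by
  have hlarge : ∀ᶠ j : ℕ in Filter.atTop,
      ∀ p : α × α, f p.1 < f p.2 → j * f p.1 + g p.1 < j * f p.2 + g p.2 := by
    refine Filter.eventually_all.2 fun ⟨a, b⟩ => ?_
    by_cases hab : f a < f b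
    · have hgrow := (tendsto_natCast_atTop_atTop (R := ℝ)).atTop_mul_const (sub_pos.2 hab)
      filter_upwards [hgrow.eventually_gt_atTop (g a - g b)] with j hj _
      linarith
    · exact Filter.Eventually.of_forall fun _ h => absurd h hab
  obtain ⟨j, hj, hpos⟩ := (hlarge.and (Filter.eventually_gt_atTop 0)).exists
  exact ⟨j, hpos, fun a b => hj (a, b)⟩

section Scores

variable (v : Finset C → Finset C → ℝ)

theorem scoreV_combine {A B : Profile C} (hd : A.Disj B) (W : Finset C) :
    scoreV v (A.combine B) W = scoreV v A W + scoreV v B W := by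
  unfold scoreV Profile.combine
  rw [sum_union hd]
  congr 1
  · exact sum_congr rfl fun i hi => by simp [hi]
  · exact sum_congr rfl fun i hi => by simp [disjoint_right.mp hd hi]

theorem scoreV_of_isCopy {A B : Profile C} (hc : IsCopy A B) (W : Finset C) :
    scoreV v B W = scoreV v A W := by
  obtain ⟨e, hvoters, hballot⟩ := hc
  unfold scoreV
  rw [hvoters, sum_map]
  exact sum_congr rfl fun i hi => by rw [hballot i hi]

theorem scoreV_of_isNCopies {j : ℕ} {A B : Profile C} (hB : IsNCopies j A B) (W : Finset C) :
    scoreV v B W = j * scoreV v A W := by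
  obtain ⟨P, hcopy, hdisj, hvoters, hballot⟩ := hB
  have hpd : ((univ : Finset (Fin j)) : Set (Fin j)).PairwiseDisjoint fun t => (P t).voters :=
    fun s _ t _ hst => hdisj s t hst
  calc scoreV v B W = ∑ t : Fin j, ∑ i ∈ (P t).voters, v (B.ballot i) W := by
        unfold scoreV; rw [hvoters, sum_biUnion hpd]
    _ = ∑ t : Fin j, scoreV v (P t) W :=
        sum_congr rfl fun t _ => sum_congr rfl fun i hi => by rw [hballot t i hi]
    _ = j * scoreV v A W := by simp [scoreV_of_isCopy v (hcopy _)]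

end Scores

section Greedy

variable (v : Finset C → Finset C → ℝ)

theorem genOf_nonempty (A : Profile C) {W : Finset C} (hW : W ≠ univ) :
    (genOf v A W).Nonempty := by
  have hne : (univ \ W).Nonempty :=
    sdiff_nonempty.2 fun hsub => hW (univ_subset_iff.mp hsub)
  obtain ⟨x, hx, hmax⟩ := exists_max_image (univ \ W) (fun x => scoreV v A (insert x W)) hne
  exact ⟨x, mem_filter.2 ⟨hx, hmax⟩⟩

theorem card_of_mem_seqRule (A : Profile C) {l : ℕ} {W : Finset C} (hW : W ∈ seqRule v A l) :
    W.card = l := by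
  induction l generalizing W with
  | zero => simp_all [seqRule]
  | succ l ih =>
    simp only [seqRule, mem_biUnion, mem_image] at hW
    obtain ⟨W', hW', x, hx, rfl⟩ := hW
    have hxW : x ∉ W' := (mem_sdiff.mp (mem_filter.mp hx).1).2
    rw [card_insert_of_notMem hxW, ih hW']

theorem seqRule_nonempty (A : Profile C) {l : ℕ} (hl : l ≤ Fintype.card C) :
    (seqRule v A l).Nonempty := by
  induction l with
  | zero => simp [seqRule]
  | succ l ih =>
    obtain ⟨W, hW⟩ := ih (by omega)
    have hWu : W ≠ univ := by
      rintro rfl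
      have := card_of_mem_seqRule v A hW
      rw [card_univ] at this
      omega
    obtain ⟨x, hx⟩ := genOf_nonempty v A hWu
    exact ⟨insert x W, mem_biUnion.2 ⟨W, hW, mem_image_of_mem _ hx⟩⟩

variable {v} {A Q : Profile C}
  (hQA : ∀ T T', scoreV v A T < scoreV v A T' → scoreV v Q T < scoreV v Q T')
include hQA

theorem genOf_subset_of_lt_imp_lt (W : Finset C) : genOf v Q W ⊆ genOf v A W := by
  intro x hx
  obtain ⟨hxW, hxmax⟩ := mem_filter.mp hx
  exact mem_filter.2 ⟨hxW, fun y hy => not_lt.1 fun hlt => (hxmax y hy).not_gt (hQA _ _ hlt)⟩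

theorem seqRule_subset_of_lt_imp_lt (l : ℕ) : seqRule v Q l ⊆ seqRule v A l := by
  induction l with
  | zero => rfl
  | succ l ih =>
    exact biUnion_subset_biUnion_of_subset_left _ ih |>.trans
      (biUnion_mono fun W _ => image_subset_image (genOf_subset_of_lt_imp_lt hQA W))

theorem seqRule_eq_singleton_of_lt_imp_lt {k : ℕ} {W : Finset C}
    (hA : seqRule v A k = {W}) : seqRule v Q k = {W} := by
  have hk : k ≤ Fintype.card C :=
    card_of_mem_seqRule v A (hA ▸ mem_singleton_self W) ▸ card_le_univ W
  exact (subset_singleton_iff.mp (hA ▸ seqRule_subset_of_lt_imp_lt hQA k)).resolve_left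
    (seqRule_nonempty v Q hk).ne_empty

end Greedy

theorem stepRule_continuous_general (h : ℕ → ℕ → ℕ → ℝ)
    (A A' : Profile C) (k : ℕ)
    (h1 : (stepRule h A k).card = 1) :
    ∃ j, 0 < j ∧ ∀ B : Profile C, IsNCopies j A B → B.Disj A' →
      stepRule h (B.combine A') k = stepRule h A k := by
  set v : Finset C → Finset C → ℝ := fun b W => h ((b ∩ W).card) W.card b.card
  obtain ⟨j, hj, hlt⟩ := exists_nat_mul_add_lt_of_lt (scoreV v A) (scoreV v A')
  refine ⟨j, hj, fun B hB hdB => ?_⟩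
  have hscore : ∀ T, scoreV v (B.combine A') T = j * scoreV v A T + scoreV v A' T := fun T => by
    rw [scoreV_combine v hdB, scoreV_of_isNCopies v hB]
  obtain ⟨W, hW⟩ := card_eq_one.mp h1
  rw [hW]
  exact seqRule_eq_singleton_of_lt_imp_lt (v := v)
    (fun T T' hTT' => by simpa only [hscore] using hlt T T' hTT') hW

/-- Every step-dependent sequential scoring rule is continuous: if `f(A,k)` is a singleton, then
for a sufficiently large number `j` of disjoint copies of `A`, adding any disjoint profile `A'`
does not change the outcome. -/
theorem stepRule_continuous (h : ℕ → ℕ → ℕ → ℝ)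
    (hh : IsStepCounting (Fintype.card C) h)
    (A A' : Profile C) (k : ℕ) (hd : A.Disj A')
    (h1 : (stepRule h A k).card = 1) :
    ∃ j, 0 < j ∧ ∀ B : Profile C, IsNCopies j A B → B.Disj A' →
      stepRule h (B.combine A') k = stepRule h A k :=
  stepRule_continuous_general h A A' k h1
end

section
/- Sequential approval voting is clone-accepting: for every profile A containing clones c, d and every committee W ⊆ C \ {c,d}, if W ∪ {c} is a winning committee of seqAV at size |W|+1, then W ∪ {c,d} is a winning committee at size |W|+2. -/
open Finset
open scoped Classical

variable {C : Type} [Fintype C] [DecidableEq C]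

/-- A Thiele counting function: non-negative, non-decreasing, with `h 1 > h 0`. -/
def IsThiele (h : ℕ → ℝ) : Prop := (∀ x, 0 ≤ h x) ∧ Monotone h ∧ h 0 < h 1

/-- The sequential Thiele rule induced by the counting function `h`. -/
noncomputable def seqThiele (h : ℕ → ℝ) : Profile C → ℕ → Finset (Finset C) :=
  seqRule fun b W => h ((b ∩ W).card)

/-- Sequential approval voting. -/
noncomputable def seqAV : Profile C → ℕ → Finset (Finset C) :=
  seqThiele fun x => (x : ℝ)

noncomputable def appScore (A : Profile C) (y : C) : ℝ :=
  ∑ i ∈ A.voters, (if y ∈ A.ballot i then (1:ℝ) else 0)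

lemma scoreAV_insert (A : Profile C) (S : Finset C) (y : C) (hy : y ∉ S) :
    scoreV (fun b W => ((b ∩ W).card : ℝ)) A (insert y S)
      = scoreV (fun b W => ((b ∩ W).card : ℝ)) A S + appScore A y := by
  unfold scoreV appScore
  rw [← Finset.sum_add_distrib]
  apply Finset.sum_congr rfl
  intro i _
  by_cases h : y ∈ A.ballot i
  · have he : A.ballot i ∩ insert y S = insert y (A.ballot i ∩ S) := by
      ext z
      simp only [Finset.mem_inter, Finset.mem_insert]
      constructor
      · rintro ⟨hzb, hz | hz⟩
        · exact Or.inl hz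
        · exact Or.inr ⟨hzb, hz⟩
      · rintro (rfl | ⟨hzb, hz⟩)
        · exact ⟨h, Or.inl rfl⟩
        · exact ⟨hzb, Or.inr hz⟩
    simp only [he, Finset.card_insert_of_notMem (show y ∉ A.ballot i ∩ S by simp [hy])]
    simp [h]
  · have he : A.ballot i ∩ insert y S = A.ballot i ∩ S := by
      ext z
      simp only [Finset.mem_inter, Finset.mem_insert]
      constructor
      · rintro ⟨hzb, hz | hz⟩
        · exact absurd (hz ▸ hzb) h
        · exact ⟨hzb, hz⟩
      · rintro ⟨hzb, hz⟩
        exact ⟨hzb, Or.inr hz⟩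
    simp only [he]; simp [h]

lemma mem_genOf_AV (A : Profile C) (S : Finset C) (x : C) :
    x ∈ genOf (fun b W => ((b ∩ W).card : ℝ)) A S ↔
      x ∉ S ∧ ∀ y, y ∉ S → appScore A y ≤ appScore A x := by
  unfold genOf
  simp only [Finset.mem_filter, Finset.mem_sdiff, Finset.mem_univ, true_and]
  constructor
  · rintro ⟨hx, h⟩
    refine ⟨hx, fun y hy => ?_⟩
    have := h y (by simp [hy])
    rw [scoreAV_insert A S y hy, scoreAV_insert A S x hx] at this
    linarith
  · rintro ⟨hx, h⟩
    refine ⟨hx, fun y hy => ?_⟩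
    have hy' : y ∉ S := by simpa using hy
    rw [scoreAV_insert A S y hy', scoreAV_insert A S x hx]
    linarith [h y hy']

lemma seqAV_sorted (A : Profile C) :
    ∀ k, ∀ S ∈ seqAV A k, ∀ z ∈ S, ∀ y, y ∉ S → appScore A y ≤ appScore A z := by
  intro k
  induction k with
  | zero =>
    intro S hS
    simp only [seqAV, seqThiele, seqRule, Finset.mem_singleton] at hS
    subst hS; simp
  | succ k ih =>
    intro S hS z hz y hy
    simp only [seqAV, seqThiele, seqRule, Finset.mem_biUnion, Finset.mem_image] at hS
    obtain ⟨T, hT, x, hx, rfl⟩ := hS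
    rw [mem_genOf_AV] at hx
    rcases Finset.mem_insert.1 hz with rfl | hzT
    · exact hx.2 y (fun hyT => hy (Finset.mem_insert_of_mem hyT))
    · exact ih T hT z hzT y (fun hyT => hy (Finset.mem_insert_of_mem hyT))

/-- seqAV is clone-accepting: if `c` and `d` are clones and `W ∪ {c}` wins at size `|W|+1`,
then `W ∪ {c,d}` wins at size `|W|+2`. -/
theorem seqAV_cloneAccepting (A : Profile C) (c d : C) (hcd : c ≠ d)
    (hclones : ∀ i ∈ A.voters, c ∈ A.ballot i ↔ d ∈ A.ballot i)
    (W : Finset C) (hc : c ∉ W) (hd : d ∉ W)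
    (hwin : insert c W ∈ seqAV A (W.card + 1)) :
    insert d (insert c W) ∈ seqAV A (W.card + 2) := by
  have happ : appScore A c = appScore A d := by
    unfold appScore
    exact Finset.sum_congr rfl fun i hi => by simp [hclones i hi]
  have hd' : d ∉ insert c W := by
    simp only [Finset.mem_insert]
    rintro (rfl | h)
    · exact hcd rfl
    · exact hd h
  have hgen : d ∈ genOf (fun b W => ((b ∩ W).card : ℝ)) A (insert c W) := by
    rw [mem_genOf_AV]
    refine ⟨hd', fun y hy => ?_⟩
    have := seqAV_sorted A (W.card + 1) _ hwin c (Finset.mem_insert_self c W) y hy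
    rwa [happ] at this
  have heq : seqAV A (W.card + 2)
      = (seqAV A (W.card + 1)).biUnion fun W' =>
          (genOf (fun b W => ((b ∩ W).card : ℝ)) A W').image fun x => insert x W' := rfl
  rw [heq, Finset.mem_biUnion]
  exact ⟨insert c W, hwin, Finset.mem_image.2 ⟨d, hgen, rfl⟩⟩
end

section
/- Sequential Chamberlin–Courant approval voting (seqCCAV) is clone-rejecting: for every profile A containing clones c, d and every committee W ≠ C with f(A,|W|) = {W}, the committee W does not contain both c and d. -/
open Finset
open scoped Classical

variable {C : Type} [Fintype C] [DecidableEq C]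

/-- Sequential Chamberlin–Courant approval voting: the sequential Thiele rule with
`h(0) = 0` and `h(x) = 1` for `x > 0`. -/
noncomputable def seqCCAV : Profile C → ℕ → Finset (Finset C) :=
  seqThiele fun x => if x = 0 then (0 : ℝ) else 1


noncomputable def ccv : Finset C → Finset C → ℝ :=
  fun b W => if (b ∩ W).card = 0 then 0 else 1

lemma seqCCAV_eq_ccv : (seqCCAV : Profile C → ℕ → Finset (Finset C)) = seqRule ccv := rfl

lemma seqRule_card (v : Finset C → Finset C → ℝ) (A : Profile C) :
    ∀ k, ∀ U ∈ seqRule v A k, U.card = k := by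
  intro k
  induction k with
  | zero => intro U hU; simp only [seqRule, mem_singleton] at hU; simp [hU]
  | succ k ih =>
    intro U hU
    simp only [seqRule, mem_biUnion, mem_image] at hU
    obtain ⟨W, hW, x, hx, rfl⟩ := hU
    have hxW : x ∉ W := by
      simp only [genOf, mem_filter, mem_sdiff] at hx
      exact hx.1.2
    rw [card_insert_of_notMem hxW, ih W hW]

lemma seqRule_extend (v : Finset C → Finset C → ℝ) (A : Profile C) {k : ℕ} {U : Finset C}
    (hU : U ∈ seqRule v A k) (hU' : U ≠ univ) :
    ∃ x ∉ U, insert x U ∈ seqRule v A (k + 1) := by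
  have hne : (univ \ U).Nonempty := by
    rw [sdiff_nonempty]
    exact fun h => hU' (univ_subset_iff.mp h)
  obtain ⟨x, hx, hmax⟩ := Finset.exists_max_image (univ \ U)
    (fun y => scoreV v A (insert y U)) hne
  refine ⟨x, (mem_sdiff.mp hx).2, ?_⟩
  simp only [seqRule, mem_biUnion, mem_image]
  exact ⟨U, hU, x, mem_filter.mpr ⟨hx, hmax⟩, rfl⟩

lemma ccv_score_mono (A : Profile C) (W' : Finset C) (y : C) :
    scoreV ccv A W' ≤ scoreV ccv A (insert y W') := by
  apply Finset.sum_le_sum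
  intro i _
  unfold ccv
  have hcard : (A.ballot i ∩ W').card ≤ (A.ballot i ∩ insert y W').card :=
    card_le_card (inter_subset_inter_left (subset_insert y W'))
  by_cases h : (A.ballot i ∩ W').card = 0
  · simp only [h, if_pos]
    split_ifs <;> norm_num
  · have h2 : (A.ballot i ∩ insert y W').card ≠ 0 := fun h0 =>
      h (Nat.le_zero.mp (h0 ▸ hcard))
    simp [h, h2]

lemma ccv_clone_score (A : Profile C) {c d : C}
    (hclones : ∀ i ∈ A.voters, c ∈ A.ballot i ↔ d ∈ A.ballot i)
    {W' : Finset C} (hc : c ∈ W') :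
    scoreV ccv A (insert d W') = scoreV ccv A W' := by
  unfold scoreV
  apply Finset.sum_congr rfl
  intro i hi
  unfold ccv
  by_cases hd : d ∈ A.ballot i
  · have hcb : c ∈ A.ballot i := (hclones i hi).mpr hd
    have h1 : (A.ballot i ∩ W').card ≠ 0 :=
      Finset.card_ne_zero_of_mem (mem_inter.mpr ⟨hcb, hc⟩)
    have h2 : (A.ballot i ∩ insert d W').card ≠ 0 :=
      Finset.card_ne_zero_of_mem (mem_inter.mpr ⟨hcb, mem_insert_of_mem hc⟩)
    rw [if_neg h1, if_neg h2]
  · have : A.ballot i ∩ insert d W' = A.ballot i ∩ W' := by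
      ext a
      simp only [mem_inter, mem_insert]
      constructor
      · rintro ⟨ha, rfl | haW⟩
        · exact absurd ha hd
        · exact ⟨ha, haW⟩
      · rintro ⟨ha, haW⟩; exact ⟨ha, Or.inr haW⟩
    rw [this]

lemma ccv_main (A : Profile C) {c d : C} (hcd : c ≠ d)
    (hclones : ∀ i ∈ A.voters, c ∈ A.ballot i ↔ d ∈ A.ballot i) :
    ∀ k, ∀ U ∈ seqRule ccv A k, c ∈ U → d ∈ U → ∀ z ∉ U, ∃ V ∈ seqRule ccv A k, z ∈ V := by
  intro k
  induction k with
  | zero =>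
    intro U hU hc _ _ _
    simp only [seqRule, mem_singleton] at hU
    subst hU
    simp at hc
  | succ k ih =>
    intro U hU hc hd z hz
    have hUmem := hU
    simp only [seqRule, mem_biUnion, mem_image] at hU
    obtain ⟨W', hW', x, hxgen, rfl⟩ := hU
    have hx := hxgen
    simp only [genOf, mem_filter, mem_sdiff, mem_univ, true_and] at hx
    have hzW' : z ∉ W' := fun h => hz (mem_insert_of_mem h)
    by_cases hcW : c ∈ W'
    · by_cases hdW : d ∈ W'
      · obtain ⟨V, hV, hzV⟩ := ih W' hW' hcW hdW z hzW'
        have hVcard : V.card = k := seqRule_card ccv A k V hV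
        have hk1 : (insert x W').card = k + 1 := seqRule_card ccv A (k+1) _ hUmem
        have hVne : V ≠ univ := by
          intro h
          have h1 : k + 1 ≤ Fintype.card C := by
            rw [← hk1, ← Finset.card_univ]
            exact card_le_card (subset_univ _)
          have h2 : Fintype.card C = k := by rw [← hVcard, h, Finset.card_univ]
          omega
        obtain ⟨y, _, hins⟩ := seqRule_extend ccv A hV hVne
        exact ⟨insert y V, hins, mem_insert_of_mem hzV⟩
      · -- x = d, c ∈ W'
        have hxd : x = d := by
          rcases mem_insert.mp hd with h | h
          · exact h.symm
          · exact absurd h hdW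
        subst hxd
        have heq : scoreV ccv A (insert x W') = scoreV ccv A W' :=
          ccv_clone_score A hclones hcW
        refine ⟨insert z W', ?_, mem_insert_self z W'⟩
        simp only [seqRule, mem_biUnion, mem_image]
        refine ⟨W', hW', z, ?_, rfl⟩
        refine mem_filter.mpr ⟨mem_sdiff.mpr ⟨mem_univ z, hzW'⟩, ?_⟩
        intro y hy
        calc scoreV ccv A (insert y W') ≤ scoreV ccv A (insert x W') := by
              apply hx.2 y (mem_sdiff.mp hy).2
          _ = scoreV ccv A W' := heq
          _ ≤ scoreV ccv A (insert z W') := ccv_score_mono A W' z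
    · -- x = c, d ∈ W'
      have hxc : x = c := by
        rcases mem_insert.mp hc with h | h
        · exact h.symm
        · exact absurd h hcW
      subst hxc
      have hdW : d ∈ W' := by
        rcases mem_insert.mp hd with h | h
        · exact absurd h.symm hcd
        · exact h
      have heq : scoreV ccv A (insert x W') = scoreV ccv A W' :=
        ccv_clone_score A (fun i hi => (hclones i hi).symm) hdW
      refine ⟨insert z W', ?_, mem_insert_self z W'⟩
      simp only [seqRule, mem_biUnion, mem_image]
      refine ⟨W', hW', z, ?_, rfl⟩
      refine mem_filter.mpr ⟨mem_sdiff.mpr ⟨mem_univ z, hzW'⟩, ?_⟩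
      intro y hy
      calc scoreV ccv A (insert y W') ≤ scoreV ccv A (insert x W') := by
            apply hx.2 y (mem_sdiff.mp hy).2
        _ = scoreV ccv A W' := heq
        _ ≤ scoreV ccv A (insert z W') := ccv_score_mono A W' z


/-- seqCCAV is clone-rejecting: a uniquely chosen committee `W ≠ C` never contains two
clones. -/
theorem seqCCAV_cloneRejecting (A : Profile C) (c d : C) (hcd : c ≠ d)
    (hclones : ∀ i ∈ A.voters, c ∈ A.ballot i ↔ d ∈ A.ballot i)
    (W : Finset C) (hWne : W ≠ univ) (hwin : seqCCAV A W.card = {W}) :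
    ¬(c ∈ W ∧ d ∈ W) := by
  rintro ⟨hcW, hdW⟩
  have hW : W ∈ seqRule ccv A W.card := by
    rw [← seqCCAV_eq_ccv, hwin]; exact mem_singleton_self W
  obtain ⟨z, _, hzW⟩ := not_subset.mp (fun h => hWne (univ_subset_iff.mp h))
  obtain ⟨V, hV, hzV⟩ := ccv_main A hcd hclones W.card W hW hcW hdW z hzW
  rw [← seqCCAV_eq_ccv, hwin, mem_singleton] at hV
  subst hV
  exact hzW hzV
end
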